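/- arXiv:1010.2791 — 4 statements merged into one kernel-verified Lean document; each statement's English description precedes it below -/
import Mathlib

section
/- Let d ≥ 1, A(x,ξ) := (1/4)(|x|² + 2 x·ξ + 3|ξ|²) and μ(x,ξ) := e^{−A(x,ξ)}. Then μ is a stationary solution of the Wigner–Fokker–Planck equation with harmonic potential: for all (x,ξ) ∈ ℝ^{2d}, (L μ)(x,ξ) := −ξ·∇_x μ + x·∇_ξ μ + Δ_ξ μ + 2 div_ξ(ξ μ) + Δ_x μ = 0. -/
open MeasureTheory Real

noncomputable def WFP.A {d : ℕ} (x ξ : EuclideanSpace ℝ (Fin d)) : ℝ :=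
  (1 / 4) * (‖x‖ ^ 2 + 2 * (inner ℝ x ξ : ℝ) + 3 * ‖ξ‖ ^ 2)

/-- The unperturbed Wigner–Fokker–Planck operator
`L w = −ξ·∇_x w + x·∇_ξ w + Δ_ξ w + 2 div_ξ(ξ w) + Δ_x w`. -/
noncomputable def WFP.L {d : ℕ}
    (w : EuclideanSpace ℝ (Fin d) × EuclideanSpace ℝ (Fin d) → ℂ)
    (p : EuclideanSpace ℝ (Fin d) × EuclideanSpace ℝ (Fin d)) : ℂ :=
  -- −ξ·∇_x w
  - fderiv ℝ w p (p.2, 0)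
  -- + x·∇_ξ w
  + fderiv ℝ w p (0, p.1)
  -- + Δ_ξ w
  + ∑ i : Fin d, fderiv ℝ (fun q => fderiv ℝ w q (0, EuclideanSpace.single i 1)) p
      (0, EuclideanSpace.single i 1)
  -- + 2 div_ξ (ξ w)
  + 2 * ∑ i : Fin d, fderiv ℝ (fun q => (q.2 i : ℂ) * w q) p (0, EuclideanSpace.single i 1)
  -- + Δ_x w
  + ∑ i : Fin d, fderiv ℝ (fun q => fderiv ℝ w q (EuclideanSpace.single i 1, 0)) p
      (EuclideanSpace.single i 1, 0)

/-!
All derivatives of `μ = e^{-A}` are `μ` times polynomials, because `A` is a quadratic form: its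
derivative `dA p` is linear in `p` and symmetric, `dA p v = dA v p`, so the second derivative of
`e^{-A}` along `v` is `e^{-A} ((dA p v)² - dA v v)`. Hence `L μ = μ · P(x, ξ)` with `P` a
quadratic polynomial summed over coordinates, and `P` vanishes coordinatewise: the constant terms
`-3/2` (from `Δ_ξ`), `+2` (from `2 div_ξ`) and `-1/2` (from `Δ_x`) cancel, and so do the quadratic
ones.
-/

section ExpOfQuadratic

variable {F : Type*} [NormedAddCommGroup F] [NormedSpace ℝ F]

theorem HasFDerivAt.fderiv_ofReal_comp_apply {f : F → ℝ} {f' : F →L[ℝ] ℝ} {p : F}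
    (hf : HasFDerivAt f f' p) (v : F) :
    fderiv ℝ (fun q => (f q : ℂ)) p v = f' v :=
  congrArg (· v) (Complex.ofRealCLM.hasFDerivAt.comp p hf).fderiv

variable {φ : F → ℝ} {φ' : F → F →L[ℝ] ℝ}

theorem fderiv_ofReal_exp_comp_apply {p : F} (hφ : HasFDerivAt φ (φ' p) p) (v : F) :
    fderiv ℝ (fun q => (exp (φ q) : ℂ)) p v = (exp (φ p) * φ' p v : ℝ) :=
  hφ.exp.fderiv_ofReal_comp_apply v

theorem fderiv_ofReal_mul_ofReal_exp_comp_apply {g : F → ℝ} {g' : F →L[ℝ] ℝ} {p : F}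
    (hg : HasFDerivAt g g' p) (hφ : HasFDerivAt φ (φ' p) p) (v : F) :
    fderiv ℝ (fun q => (g q : ℂ) * (exp (φ q) : ℂ)) p v
      = (exp (φ p) * (g' v + g p * φ' p v) : ℝ) := by
  simp only [← Complex.ofReal_mul]
  refine ((hg.mul hφ.exp).fderiv_ofReal_comp_apply v).trans ?_
  simp only [add_apply, smul_apply, smul_eq_mul]
  congr 1
  ring

theorem fderiv_fderiv_ofReal_exp_comp_apply (hφ : ∀ q, HasFDerivAt φ (φ' q) q)
    (hsymm : ∀ q v, φ' q v = φ' v q) (p v : F) :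
    fderiv ℝ (fun q => fderiv ℝ (fun q => (exp (φ q) : ℂ)) q v) p v
      = (exp (φ p) * (φ' p v ^ 2 + φ' v v) : ℝ) := by
  have hfun : (fun q => fderiv ℝ (fun q => (exp (φ q) : ℂ)) q v)
      = fun q => (φ' v q : ℂ) * (exp (φ q) : ℂ) := by
    funext q
    rw [fderiv_ofReal_exp_comp_apply (hφ q), hsymm, Complex.ofReal_mul, mul_comm]
  rw [hfun, fderiv_ofReal_mul_ofReal_exp_comp_apply (φ' v).hasFDerivAt (hφ p), hsymm v p]
  congr 1
  ring

end ExpOfQuadratic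

namespace WFP

variable {d : ℕ}

local notation "E" => EuclideanSpace ℝ (Fin d)

theorem L_ofReal_exp {φ : E × E → ℝ} {φ' : E × E → E × E →L[ℝ] ℝ}
    (hφ : ∀ q, HasFDerivAt φ (φ' q) q) (hsymm : ∀ q v, φ' q v = φ' v q) (p : E × E) :
    L (fun q => (exp (φ q) : ℂ)) p = (exp (φ p) * (-φ' p (p.2, 0) + φ' p (0, p.1)
      + ∑ i, (φ' p (0, EuclideanSpace.single i 1) ^ 2
        + φ' (0, EuclideanSpace.single i 1) (0, EuclideanSpace.single i 1))
      + 2 * ∑ i, (1 + p.2 i * φ' p (0, EuclideanSpace.single i 1))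
      + ∑ i, (φ' p (EuclideanSpace.single i 1, 0) ^ 2
        + φ' (EuclideanSpace.single i 1, 0) (EuclideanSpace.single i 1, 0))) : ℝ) := by
  have hcoord (i : Fin d) : HasFDerivAt (fun q : E × E => q.2 i)
      ((EuclideanSpace.proj i).comp (ContinuousLinearMap.snd ℝ E E)) p :=
    ((EuclideanSpace.proj i).comp (ContinuousLinearMap.snd ℝ E E)).hasFDerivAt
  simp only [L, fderiv_fderiv_ofReal_exp_comp_apply hφ hsymm,
    fderiv_ofReal_mul_ofReal_exp_comp_apply (hcoord _) (hφ p), fderiv_ofReal_exp_comp_apply (hφ p)]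
  norm_cast
  simp only [ContinuousLinearMap.comp_apply, ContinuousLinearMap.coe_snd',
    EuclideanSpace.coe_proj, PiLp.single_apply, if_true, Nat.cast_one, ← Finset.mul_sum]
  ring

noncomputable def dA (p : E × E) : E × E →L[ℝ] ℝ :=
  (1 / 2 : ℝ) • ((innerSL ℝ (p.1 + p.2)).comp (ContinuousLinearMap.fst ℝ E E)
    + (innerSL ℝ (p.1 + (3 : ℝ) • p.2)).comp (ContinuousLinearMap.snd ℝ E E))

theorem dA_apply (p v : E × E) :
    dA p v = (1 / 2) * (inner ℝ (p.1 + p.2) v.1 + inner ℝ (p.1 + (3 : ℝ) • p.2) v.2) :=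
  rfl

theorem dA_comm (p v : E × E) : dA p v = dA v p := by
  simp only [dA_apply, inner_add_left, inner_smul_left, RCLike.conj_to_real]
  rw [real_inner_comm p.1 v.1, real_inner_comm p.2 v.1, real_inner_comm p.1 v.2,
    real_inner_comm p.2 v.2]
  ring

theorem hasFDerivAt_A (p : E × E) : HasFDerivAt (fun q : E × E => A q.1 q.2) (dA p) p := by
  have hx : HasFDerivAt (fun q : E × E => q.1) (ContinuousLinearMap.fst ℝ E E) p := hasFDerivAt_fst
  have hξ : HasFDerivAt (fun q : E × E => q.2) (ContinuousLinearMap.snd ℝ E E) p := hasFDerivAt_snd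
  have h := ((hx.norm_sq.add ((hx.inner ℝ hξ).const_mul 2)).add
    (hξ.norm_sq.const_mul 3)).const_mul (1 / 4 : ℝ)
  refine h.congr_fderiv (ContinuousLinearMap.ext fun v => ?_)
  simp only [add_apply, smul_apply, ContinuousLinearMap.comp_apply, ContinuousLinearMap.coe_fst',
    ContinuousLinearMap.coe_snd', coe_innerSL_apply, nsmul_eq_mul, Nat.cast_ofNat, smul_eq_mul,
    fderivInnerCLM_apply, ContinuousLinearMap.prod_apply, dA_apply, inner_add_left,
    inner_smul_left, real_inner_comm, RCLike.conj_to_real]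
  ring

theorem dA_single_fst (p : E × E) (i : Fin d) :
    dA p (EuclideanSpace.single i 1, 0) = (1 / 2) * (p.1 i + p.2 i) := by
  simp [dA_apply, EuclideanSpace.inner_single_right]

theorem dA_single_snd (p : E × E) (i : Fin d) :
    dA p (0, EuclideanSpace.single i 1) = (1 / 2) * (p.1 i + 3 * p.2 i) := by
  simp [dA_apply, EuclideanSpace.inner_single_right]

end WFP

theorem WFP.L_mu_eq_zero_general (d : ℕ)
    (p : EuclideanSpace ℝ (Fin d) × EuclideanSpace ℝ (Fin d)) :
    WFP.L (fun q => (Real.exp (-(WFP.A q.1 q.2)) : ℂ)) p = 0 := by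
  rw [L_ofReal_exp (φ := fun q => -A q.1 q.2) (φ' := fun q => -dA q)
    (fun q => (hasFDerivAt_A q).neg) (fun q v => by simp only [neg_apply, dA_comm]),
    Complex.ofReal_eq_zero]
  refine mul_eq_zero_of_right _ ?_
  simp only [neg_apply, dA_single_fst, dA_single_snd]
  simp only [dA_apply, PiLp.inner_apply, PiLp.add_apply, PiLp.smul_apply, PiLp.zero_apply,
    PiLp.single_apply, if_true, inner_zero_right, add_zero, zero_add, RCLike.inner_apply,
    conj_trivial, smul_eq_mul]
  simp only [Finset.mul_sum, ← Finset.sum_neg_distrib, ← Finset.sum_add_distrib]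
  exact Finset.sum_eq_zero fun i _ => by ring

/-- `μ = e^{−A}` is a stationary solution: `L μ = 0` pointwise. -/
theorem WFP.L_mu_eq_zero (d : ℕ) (hd : 1 ≤ d)
    (p : EuclideanSpace ℝ (Fin d) × EuclideanSpace ℝ (Fin d)) :
    WFP.L (fun q => (Real.exp (-(WFP.A q.1 q.2)) : ℂ)) p = 0 :=
  WFP.L_mu_eq_zero_general d p
end

section
/- Let d ≥ 1, A(x,ξ) := (1/4)(|x|² + 2 x·ξ + 3|ξ|²) and F(x,ξ) := (1/2)(−x − 3ξ, x + ξ). Then for every C² function w : ℝ^{2d} → ℂ and all (x,ξ) ∈ ℝ^{2d}, the Wigner–Fokker–Planck operator with harmonic potential admits the drift–diffusion decomposition: −ξ·∇_x w + x·∇_ξ w + Δ_ξ w + 2 div_ξ(ξ w) + Δ_x w = div( ∇w + w (∇A + F) ), where ∇ and div on the right-hand side act in all 2d variables (x,ξ). -/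
open MeasureTheory Real

/-- `F(x,ξ) := (1/2)(−x − 3ξ, x + ξ)`. -/
noncomputable def WFP.F {d : ℕ}
    (p : EuclideanSpace ℝ (Fin d) × EuclideanSpace ℝ (Fin d)) :
    EuclideanSpace ℝ (Fin d) × EuclideanSpace ℝ (Fin d) :=
  ((1 / 2 : ℝ) • (-p.1 - (3 : ℝ) • p.2), (1 / 2 : ℝ) • (p.1 + p.2))

/-!
The drift field is `∇A + F = (-ξ, x + 2ξ)`, which is linear with divergence `2d`.
Expanding `div (w (∇A + F))` by the product rule gives `-ξ·∇ₓw + (x + 2ξ)·∇_ξ w + 2d w`, and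
`2 div_ξ (ξ w) = 2ξ·∇_ξ w + 2d w`, so the two sides agree term by term.
-/

open scoped RealInnerProductSpace

theorem ContinuousLinearMap.apply_eq_sum_single {𝕜 ι M : Type*} [RCLike 𝕜] [Fintype ι]
    [DecidableEq ι] [AddCommGroup M] [Module 𝕜 M] [TopologicalSpace M]
    (f : EuclideanSpace 𝕜 ι →L[𝕜] M) (v : EuclideanSpace 𝕜 ι) :
    f v = ∑ i, v i • f (EuclideanSpace.single i 1) := by
  conv_lhs => rw [← (EuclideanSpace.basisFun ι 𝕜).sum_repr v]
  simp [map_sum]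

section ProductRule

variable {V : Type*} [NormedAddCommGroup V] [NormedSpace ℝ V]

theorem fderiv_mul_ofReal_clm_apply {w : V → ℂ} {p : V} (hw : DifferentiableAt ℝ w p)
    (c : V →L[ℝ] ℝ) (v : V) :
    fderiv ℝ (fun q => w q * (c q : ℂ)) p v = fderiv ℝ w p v * c p + w p * c v := by
  have hc : HasFDerivAt (fun q => (c q : ℂ)) (Complex.ofRealCLM.comp c) p :=
    (Complex.ofRealCLM.comp c).hasFDerivAt
  rw [fderiv_fun_mul hw hc.differentiableAt, hc.fderiv]
  simp only [add_apply, smul_apply, smul_eq_mul, ContinuousLinearMap.comp_apply,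
    Complex.ofRealCLM_apply]
  ring

theorem fderiv_fderiv_add_mul_ofReal_apply {w : V → ℂ} (hw : ContDiff ℝ 2 w) (b : V → ℝ)
    (c : V →L[ℝ] ℝ) (hb : ∀ q, b q = c q) (p u v : V) :
    fderiv ℝ (fun q => fderiv ℝ w q u + w q * (b q : ℂ)) p v
      = fderiv ℝ (fun q => fderiv ℝ w q u) p v + fderiv ℝ w p v * c p + w p * c v := by
  have hw1 : Differentiable ℝ w := hw.differentiable (by norm_num)
  have hDw : Differentiable ℝ (fun q => fderiv ℝ w q u) :=
    ((hw.fderiv_right (m := 1) le_rfl).differentiable one_ne_zero).clm_apply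
      (differentiable_const u)
  simp only [hb]
  rw [fderiv_fun_add hDw.differentiableAt (by fun_prop), add_apply,
    fderiv_mul_ofReal_clm_apply hw1.differentiableAt, add_assoc]

end ProductRule

namespace WFP

variable {d : ℕ}

local notation "E" => EuclideanSpace ℝ (Fin d)

attribute [local fun_prop] DifferentiableAt.inner

theorem fderiv_A_apply (q v : E × E) :
    fderiv ℝ (fun r : E × E => A r.1 r.2) q v
      = (1 / 2) * (⟪q.1, v.1⟫ + ⟪q.2, v.1⟫ + ⟪q.1, v.2⟫ + 3 * ⟪q.2, v.2⟫) := by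
  have hA : (fun r : E × E => A r.1 r.2)
      = fun r => (1 / 4) * (⟪r.1, r.1⟫ + 2 * ⟪r.1, r.2⟫ + 3 * ⟪r.2, r.2⟫) := by
    funext r
    simp only [A, real_inner_self_eq_norm_sq]
  rw [hA]
  simp (disch := fun_prop) only [fderiv_const_mul, fderiv_fun_add, fderiv_inner_apply,
    fderiv_fst, fderiv_snd, smul_apply, add_apply, smul_eq_mul,
    ContinuousLinearMap.coe_fst', ContinuousLinearMap.coe_snd']
  rw [real_inner_comm v.1 q.1, real_inner_comm v.1 q.2, real_inner_comm v.2 q.2]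
  ring

theorem fderiv_A_add_F_fst (q : E × E) (i : Fin d) :
    fderiv ℝ (fun r : E × E => A r.1 r.2) q (EuclideanSpace.single i 1, 0) + (F q).1 i
      = -q.2 i := by
  rw [fderiv_A_apply]
  simp only [F, EuclideanSpace.inner_single_right, inner_zero_right, PiLp.sub_apply,
    PiLp.neg_apply, PiLp.smul_apply, smul_eq_mul, ringHom_apply]
  ring

theorem fderiv_A_add_F_snd (q : E × E) (i : Fin d) :
    fderiv ℝ (fun r : E × E => A r.1 r.2) q (0, EuclideanSpace.single i 1) + (F q).2 i
      = q.1 i + 2 * q.2 i := by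
  rw [fderiv_A_apply]
  simp only [F, EuclideanSpace.inner_single_right, inner_zero_right, PiLp.add_apply,
    PiLp.smul_apply, smul_eq_mul, ringHom_apply]
  ring

theorem fderiv_flux_fst_single {w : E × E → ℂ} (hw : ContDiff ℝ 2 w) (p : E × E) (i : Fin d) :
    fderiv ℝ (fun q => fderiv ℝ w q (EuclideanSpace.single i 1, 0)
        + w q * ((fderiv ℝ (fun r : E × E => A r.1 r.2) q (EuclideanSpace.single i 1, 0)
          + (F q).1 i : ℝ) : ℂ)) p (EuclideanSpace.single i 1, 0)
      = fderiv ℝ (fun q => fderiv ℝ w q (EuclideanSpace.single i 1, 0)) p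
          (EuclideanSpace.single i 1, 0)
        - fderiv ℝ w p (EuclideanSpace.single i 1, 0) * p.2 i :=
  (fderiv_fderiv_add_mul_ofReal_apply hw _ (-(EuclideanSpace.proj i ∘L .snd ℝ E E))
    (fun q => fderiv_A_add_F_fst q i) p _ _).trans (by simp [sub_eq_add_neg])

theorem fderiv_flux_snd_single {w : E × E → ℂ} (hw : ContDiff ℝ 2 w) (p : E × E) (i : Fin d) :
    fderiv ℝ (fun q => fderiv ℝ w q (0, EuclideanSpace.single i 1)
        + w q * ((fderiv ℝ (fun r : E × E => A r.1 r.2) q (0, EuclideanSpace.single i 1)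
          + (F q).2 i : ℝ) : ℂ)) p (0, EuclideanSpace.single i 1)
      = fderiv ℝ (fun q => fderiv ℝ w q (0, EuclideanSpace.single i 1)) p
          (0, EuclideanSpace.single i 1)
        + fderiv ℝ w p (0, EuclideanSpace.single i 1) * (p.1 i + 2 * p.2 i) + 2 * w p :=
  (fderiv_fderiv_add_mul_ofReal_apply hw _
    (EuclideanSpace.proj i ∘L .fst ℝ E E + (2 : ℝ) • EuclideanSpace.proj i ∘L .snd ℝ E E)
    (fun q => fderiv_A_add_F_snd q i) p _ _).trans (by simp [mul_comm])

theorem fderiv_coord_snd_mul_single {w : E × E → ℂ} {p : E × E} (hw : DifferentiableAt ℝ w p)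
    (i : Fin d) :
    fderiv ℝ (fun q => (q.2 i : ℂ) * w q) p (0, EuclideanSpace.single i 1)
      = fderiv ℝ w p (0, EuclideanSpace.single i 1) * p.2 i + w p := by
  simp_rw [mul_comm _ (w _)]
  exact (fderiv_mul_ofReal_clm_apply hw (EuclideanSpace.proj i ∘L .snd ℝ E E) _).trans
    (by simp)

end WFP

theorem WFP.drift_diffusion_form_general (d : ℕ)
    (w : EuclideanSpace ℝ (Fin d) × EuclideanSpace ℝ (Fin d) → ℂ)
    (hw : ContDiff ℝ 2 w)
    (p : EuclideanSpace ℝ (Fin d) × EuclideanSpace ℝ (Fin d)) :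
    WFP.L w p =
      (∑ i : Fin d, fderiv ℝ (fun q =>
          fderiv ℝ w q (EuclideanSpace.single i 1, 0)
            + w q * (((fderiv ℝ (fun r : EuclideanSpace ℝ (Fin d) × EuclideanSpace ℝ (Fin d) =>
                WFP.A r.1 r.2) q (EuclideanSpace.single i 1, 0)) + (WFP.F q).1 i : ℝ) : ℂ))
          p (EuclideanSpace.single i 1, 0))
      + ∑ i : Fin d, fderiv ℝ (fun q =>
          fderiv ℝ w q (0, EuclideanSpace.single i 1)
            + w q * (((fderiv ℝ (fun r : EuclideanSpace ℝ (Fin d) × EuclideanSpace ℝ (Fin d) =>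
                WFP.A r.1 r.2) q (0, EuclideanSpace.single i 1)) + (WFP.F q).2 i : ℝ) : ℂ))
          p (0, EuclideanSpace.single i 1) := by
  have hw1 : Differentiable ℝ w := hw.differentiable (by norm_num)
  have grad_x : fderiv ℝ w p (p.2, 0) = ∑ i, p.2 i • fderiv ℝ w p (EuclideanSpace.single i 1, 0) :=
    ((fderiv ℝ w p).comp (.inl ℝ _ _)).apply_eq_sum_single p.2
  have grad_ξ : fderiv ℝ w p (0, p.1) = ∑ i, p.1 i • fderiv ℝ w p (0, EuclideanSpace.single i 1) :=
    ((fderiv ℝ w p).comp (.inr ℝ _ _)).apply_eq_sum_single p.1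
  rw [WFP.L, grad_x, grad_ξ]
  simp only [WFP.fderiv_flux_fst_single hw, WFP.fderiv_flux_snd_single hw,
    WFP.fderiv_coord_snd_mul_single hw1.differentiableAt, Complex.real_smul, Finset.mul_sum,
    ← Finset.sum_neg_distrib, ← Finset.sum_add_distrib]
  exact Finset.sum_congr rfl fun i _ => by ring

/-- drift-diffusion decomposition `L w = div(∇w + w(∇A + F))`,
where `∇` and `div` on the right act in all 2d variables. -/
theorem WFP.drift_diffusion_form (d : ℕ) (hd : 1 ≤ d)
    (w : EuclideanSpace ℝ (Fin d) × EuclideanSpace ℝ (Fin d) → ℂ)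
    (hw : ContDiff ℝ 2 w)
    (p : EuclideanSpace ℝ (Fin d) × EuclideanSpace ℝ (Fin d)) :
    WFP.L w p =
      (∑ i : Fin d, fderiv ℝ (fun q =>
          fderiv ℝ w q (EuclideanSpace.single i 1, 0)
            + w q * (((fderiv ℝ (fun r : EuclideanSpace ℝ (Fin d) × EuclideanSpace ℝ (Fin d) =>
                WFP.A r.1 r.2) q (EuclideanSpace.single i 1, 0)) + (WFP.F q).1 i : ℝ) : ℂ))
          p (EuclideanSpace.single i 1, 0))
      + ∑ i : Fin d, fderiv ℝ (fun q =>
          fderiv ℝ w q (0, EuclideanSpace.single i 1)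
            + w q * (((fderiv ℝ (fun r : EuclideanSpace ℝ (Fin d) × EuclideanSpace ℝ (Fin d) =>
                WFP.A r.1 r.2) q (0, EuclideanSpace.single i 1)) + (WFP.F q).2 i : ℝ) : ℂ))
          p (0, EuclideanSpace.single i 1) :=
  WFP.drift_diffusion_form_general d w hw p
end

section
/- Let d ≥ 1, A(x,ξ) := (1/4)(|x|² + 2 x·ξ + 3|ξ|²), and let L w := −ξ·∇_x w + x·∇_ξ w + Δ_ξ w + 2 div_ξ(ξ w) + Δ_x w. Then L restricted to C_c^∞ is dissipative in the Gaussian-weighted space H = L²(ℝ^{2d}, e^{A} dx dξ): for every w ∈ C_c^∞(ℝ^{2d}; ℂ), Re ∬_{ℝ^{2d}} (L w)(x,ξ) · conj(w(x,ξ)) · e^{A(x,ξ)} dx dξ ≤ 0. -/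
open MeasureTheory Real

namespace WFPAux

variable {d : ℕ}

abbrev Pd (d : ℕ) := EuclideanSpace ℝ (Fin d) × EuclideanSpace ℝ (Fin d)

noncomputable def exdir (i : Fin d) : Pd d := (EuclideanSpace.single i 1, 0)
noncomputable def epdir (i : Fin d) : Pd d := (0, EuclideanSpace.single i 1)

noncomputable def Ab (p : Pd d) : ℝ := WFP.A p.1 p.2
noncomputable def Ee (p : Pd d) : ℝ := Real.exp (Ab p)

lemma Ee_pos (p : Pd d) : 0 < Ee p := Real.exp_pos _

lemma Ab_eq : (Ab (d := d)) = fun p =>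
    (1/4) * ((inner ℝ p.1 p.1 : ℝ) + 2 * (inner ℝ p.1 p.2 : ℝ) + 3 * (inner ℝ p.2 p.2 : ℝ)) := by
  funext p
  simp only [Ab, WFP.A, ← real_inner_self_eq_norm_sq]

lemma contDiff_Ab : ContDiff ℝ (⊤ : ℕ∞) (Ab (d := d)) := by
  rw [Ab_eq]
  exact contDiff_const.mul
    (((contDiff_fst.inner ℝ contDiff_fst).add
      (contDiff_const.mul (contDiff_fst.inner ℝ contDiff_snd))).add
      (contDiff_const.mul (contDiff_snd.inner ℝ contDiff_snd)))

lemma contDiff_Ee : ContDiff ℝ (⊤ : ℕ∞) (Ee (d := d)) := Real.contDiff_exp.comp contDiff_Ab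

lemma fderiv_Ab_apply (p v : Pd d) :
    fderiv ℝ Ab p v = (1/4) * ((2 * (inner ℝ p.1 v.1 : ℝ))
      + 2 * ((inner ℝ p.1 v.2 : ℝ) + (inner ℝ v.1 p.2 : ℝ)) + 3 * (2 * (inner ℝ p.2 v.2 : ℝ))) := by
  have dfst : DifferentiableAt ℝ (fun q : Pd d => q.1) p := differentiableAt_fst
  have dsnd : DifferentiableAt ℝ (fun q : Pd d => q.2) p := differentiableAt_snd
  have h11 : DifferentiableAt ℝ (fun q : Pd d => (inner ℝ q.1 q.1 : ℝ)) p :=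
    dfst.inner ℝ dfst
  have h12 : DifferentiableAt ℝ (fun q : Pd d => (inner ℝ q.1 q.2 : ℝ)) p :=
    dfst.inner ℝ dsnd
  have h22 : DifferentiableAt ℝ (fun q : Pd d => (inner ℝ q.2 q.2 : ℝ)) p :=
    dsnd.inner ℝ dsnd
  have e11 : fderiv ℝ (fun q : Pd d => (inner ℝ q.1 q.1 : ℝ)) p v
      = 2 * (inner ℝ p.1 v.1 : ℝ) := by
    rw [fderiv_inner_apply ℝ dfst dfst, fderiv_fst, ContinuousLinearMap.coe_fst',
      real_inner_comm v.1 p.1]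
    ring
  have e12 : fderiv ℝ (fun q : Pd d => (inner ℝ q.1 q.2 : ℝ)) p v
      = (inner ℝ p.1 v.2 : ℝ) + (inner ℝ v.1 p.2 : ℝ) := by
    rw [fderiv_inner_apply ℝ dfst dsnd, fderiv_fst, fderiv_snd,
      ContinuousLinearMap.coe_fst', ContinuousLinearMap.coe_snd']
  have e22 : fderiv ℝ (fun q : Pd d => (inner ℝ q.2 q.2 : ℝ)) p v
      = 2 * (inner ℝ p.2 v.2 : ℝ) := by
    rw [fderiv_inner_apply ℝ dsnd dsnd, fderiv_snd, ContinuousLinearMap.coe_snd',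
      real_inner_comm v.2 p.2]
    ring
  rw [Ab_eq]
  rw [fderiv_const_mul (((h11.fun_add (h12.const_mul 2))).fun_add (h22.const_mul 3))]
  rw [ContinuousLinearMap.smul_apply]
  rw [fderiv_fun_add (h11.fun_add (h12.const_mul 2)) (h22.const_mul 3)]
  rw [ContinuousLinearMap.add_apply]
  rw [fderiv_fun_add h11 (h12.const_mul 2), ContinuousLinearMap.add_apply]
  rw [fderiv_const_mul h12, fderiv_const_mul h22]
  rw [ContinuousLinearMap.smul_apply, ContinuousLinearMap.smul_apply]
  rw [e11, e12, e22]
  simp only [smul_eq_mul]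

lemma inner_single_r (v : EuclideanSpace ℝ (Fin d)) (i : Fin d) :
    (inner ℝ v (EuclideanSpace.single i (1:ℝ)) : ℝ) = v i := by
  simp [EuclideanSpace.inner_single_right]

lemma inner_single_l (v : EuclideanSpace ℝ (Fin d)) (i : Fin d) :
    (inner ℝ (EuclideanSpace.single i (1:ℝ)) v : ℝ) = v i := by
  simp [EuclideanSpace.inner_single_left]

lemma fderiv_Ab_exdir (p : Pd d) (i : Fin d) :
    fderiv ℝ Ab p (exdir i) = (p.1 i + p.2 i)/2 := by
  rw [fderiv_Ab_apply]
  simp only [exdir, inner_single_r, inner_single_l, inner_zero_right, inner_zero_left]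
  ring

lemma fderiv_Ab_epdir (p : Pd d) (i : Fin d) :
    fderiv ℝ Ab p (epdir i) = (p.1 i + 3 * p.2 i)/2 := by
  rw [fderiv_Ab_apply]
  simp only [epdir, inner_single_r, inner_single_l, inner_zero_right, inner_zero_left]
  ring

lemma fderiv_Ee_apply (p v : Pd d) :
    fderiv ℝ (Ee (d := d)) p v = Ee p * fderiv ℝ Ab p v := by
  have : fderiv ℝ (fun q : Pd d => Real.exp (Ab q)) p = Real.exp (Ab p) • fderiv ℝ Ab p :=
    _root_.fderiv_exp (contDiff_Ab.differentiable (by simp)).differentiableAt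
  show fderiv ℝ (fun q : Pd d => Real.exp (Ab q)) p v = _
  rw [this, ContinuousLinearMap.smul_apply, smul_eq_mul]
  rfl

lemma contDiff_conj {f : Pd d → ℂ} (hf : ContDiff ℝ (⊤ : ℕ∞) f) :
    ContDiff ℝ (⊤ : ℕ∞) fun q => (starRingEnd ℂ) (f q) :=
  Complex.conjCLE.contDiff.comp hf

lemma fderiv_conj_apply (f : Pd d → ℂ) (p v : Pd d) :
    fderiv ℝ (fun q => (starRingEnd ℂ) (f q)) p v = (starRingEnd ℂ) (fderiv ℝ f p v) := by
  have h := fderiv_star (𝕜 := ℝ) (f := f) (x := p)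
  have h2 : (fun y => star (f y)) = fun q => (starRingEnd ℂ) (f q) := rfl
  rw [h2] at h
  rw [h]
  simp

lemma diff_cX (i : Fin d) : ContDiff ℝ (⊤ : ℕ∞) (fun q : Pd d => q.1 i) :=
  ((EuclideanSpace.proj i).comp
    (ContinuousLinearMap.fst ℝ (EuclideanSpace ℝ (Fin d)) (EuclideanSpace ℝ (Fin d)))).contDiff

lemma fderiv_cX (i : Fin d) (p v : Pd d) : fderiv ℝ (fun q : Pd d => q.1 i) p v = v.1 i := by
  rw [show (fun q : Pd d => q.1 i) = ⇑((EuclideanSpace.proj i).comp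
    (ContinuousLinearMap.fst ℝ (EuclideanSpace ℝ (Fin d)) (EuclideanSpace ℝ (Fin d)))) from rfl,
    ContinuousLinearMap.fderiv]
  rfl

lemma diff_cY (i : Fin d) : ContDiff ℝ (⊤ : ℕ∞) (fun q : Pd d => q.2 i) :=
  ((EuclideanSpace.proj i).comp
    (ContinuousLinearMap.snd ℝ (EuclideanSpace ℝ (Fin d)) (EuclideanSpace ℝ (Fin d)))).contDiff

lemma fderiv_cY (i : Fin d) (p v : Pd d) : fderiv ℝ (fun q : Pd d => q.2 i) p v = v.2 i := by
  rw [show (fun q : Pd d => q.2 i) = ⇑((EuclideanSpace.proj i).comp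
    (ContinuousLinearMap.snd ℝ (EuclideanSpace ℝ (Fin d)) (EuclideanSpace ℝ (Fin d)))) from rfl,
    ContinuousLinearMap.fderiv]
  rfl

lemma contDiff_fderiv_apply {f : Pd d → ℂ} (hf : ContDiff ℝ (⊤ : ℕ∞) f) (v : Pd d) :
    ContDiff ℝ (⊤ : ℕ∞) (fun q => fderiv ℝ f q v) :=
  (hf.fderiv_right (by simp)).clm_apply contDiff_const

lemma sum_smul_single (x : EuclideanSpace ℝ (Fin d)) :
    ∑ i, x i • EuclideanSpace.single i (1:ℝ) = x := by
  have h := (EuclideanSpace.basisFun (Fin d) ℝ).sum_repr x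
  simpa [EuclideanSpace.basisFun_apply, EuclideanSpace.basisFun_repr] using h

variable {w : Pd d → ℂ}

/-- Decomposition of the `x`-transport direction. -/
lemma fderiv_dir1 (p : Pd d) :
    fderiv ℝ w p ((p.2, 0) : Pd d) = ∑ i, (p.2 i : ℂ) * fderiv ℝ w p (exdir i) := by
  have hd : ((p.2, 0) : Pd d) = ∑ i, p.2 i • exdir i := by
    rw [Prod.ext_iff]
    refine ⟨?_, ?_⟩
    · rw [Prod.fst_sum]
      simp only [exdir, Prod.smul_mk, smul_zero]
      exact (sum_smul_single p.2).symm
    · rw [Prod.snd_sum]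
      simp [exdir]
  rw [hd, map_sum]
  refine Finset.sum_congr rfl fun i _ => ?_
  rw [ContinuousLinearMap.map_smul, Complex.real_smul]

/-- Decomposition of the `ξ`-transport direction. -/
lemma fderiv_dir2 (p : Pd d) :
    fderiv ℝ w p ((0, p.1) : Pd d) = ∑ i, (p.1 i : ℂ) * fderiv ℝ w p (epdir i) := by
  have hd : ((0, p.1) : Pd d) = ∑ i, p.1 i • epdir i := by
    rw [Prod.ext_iff]
    refine ⟨?_, ?_⟩
    · rw [Prod.fst_sum]
      simp [epdir]
    · rw [Prod.snd_sum]
      simp only [epdir, Prod.smul_mk, smul_zero]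
      exact (sum_smul_single p.1).symm
  rw [hd, map_sum]
  refine Finset.sum_congr rfl fun i _ => ?_
  rw [ContinuousLinearMap.map_smul, Complex.real_smul]

lemma fderiv_coordmul_apply (hw : ContDiff ℝ (⊤ : ℕ∞) w) (p : Pd d) (i : Fin d) :
    fderiv ℝ (fun q : Pd d => (q.2 i : ℂ) * w q) p (epdir i)
      = w p + (p.2 i : ℂ) * fderiv ℝ w p (epdir i) := by
  have hwd : DifferentiableAt ℝ w p := (hw.differentiable (by simp)).differentiableAt
  set Cy : Pd d →L[ℝ] ℂ := Complex.ofRealCLM.comp ((EuclideanSpace.proj i).comp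
    (ContinuousLinearMap.snd ℝ (EuclideanSpace ℝ (Fin d)) (EuclideanSpace ℝ (Fin d)))) with hCy
  have hfun : (fun q : Pd d => ((q.2 i : ℝ) : ℂ)) = ⇑Cy := rfl
  have hCyd : DifferentiableAt ℝ (fun q : Pd d => ((q.2 i : ℝ) : ℂ)) p := by
    rw [hfun]; exact Cy.differentiableAt
  have hmul := fderiv_fun_mul (𝕜 := ℝ) hCyd hwd
  have happ := congrArg (fun (L : Pd d →L[ℝ] ℂ) => L (epdir i)) hmul
  simp only [ContinuousLinearMap.add_apply, ContinuousLinearMap.smul_apply] at happ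
  have hder : fderiv ℝ (fun q : Pd d => ((q.2 i : ℝ) : ℂ)) p = Cy := by
    rw [hfun]; exact Cy.fderiv
  rw [hder] at happ
  have hval : Cy (epdir i) = 1 := by
    simp [hCy, epdir, EuclideanSpace.single_apply]
  rw [hval] at happ
  rw [happ]
  simp [smul_eq_mul]
  ring

noncomputable def Lterm (w : Pd d → ℂ) (i : Fin d) (p : Pd d) : ℂ :=
  -((p.2 i : ℂ) * fderiv ℝ w p (exdir i)) + (p.1 i : ℂ) * fderiv ℝ w p (epdir i)
    + fderiv ℝ (fun q => fderiv ℝ w q (epdir i)) p (epdir i)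
    + 2 * (w p + (p.2 i : ℂ) * fderiv ℝ w p (epdir i))
    + fderiv ℝ (fun q => fderiv ℝ w q (exdir i)) p (exdir i)

lemma L_decomp (hw : ContDiff ℝ (⊤ : ℕ∞) w) (p : Pd d) :
    WFP.L w p = ∑ i, Lterm w i p := by
  unfold WFP.L
  rw [fderiv_dir1, fderiv_dir2]
  have h4 : (∑ i : Fin d, fderiv ℝ (fun q : Pd d => (q.2 i : ℂ) * w q) p
      (0, EuclideanSpace.single i 1))
      = ∑ i : Fin d, (w p + (p.2 i : ℂ) * fderiv ℝ w p (epdir i)) :=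
    Finset.sum_congr rfl fun i _ => fderiv_coordmul_apply hw p i
  rw [h4, Finset.mul_sum, ← Finset.sum_neg_distrib, ← Finset.sum_add_distrib,
    ← Finset.sum_add_distrib, ← Finset.sum_add_distrib, ← Finset.sum_add_distrib]
  rfl

noncomputable def Fp (w : Pd d → ℂ) (i : Fin d) : Pd d → ℝ := fun q =>
  ((fderiv ℝ w q (exdir i) * (starRingEnd ℂ) (w q)).re
    + ((1/4 : ℝ) * (q.1 i - q.2 i)) * (w q * (starRingEnd ℂ) (w q)).re) * Ee q

noncomputable def Gp (w : Pd d → ℂ) (i : Fin d) : Pd d → ℝ := fun q =>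
  ((fderiv ℝ w q (epdir i) * (starRingEnd ℂ) (w q)).re
    + ((1/4 : ℝ) * (3 * q.1 i + 7 * q.2 i)) * (w q * (starRingEnd ℂ) (w q)).re) * Ee q

lemma fderiv_re_mul_conj {g h : Pd d → ℂ} {p : Pd d} (hg : DifferentiableAt ℝ g p)
    (hh : DifferentiableAt ℝ h p) (v : Pd d) :
    fderiv ℝ (fun q => (g q * (starRingEnd ℂ) (h q)).re) p v
      = (fderiv ℝ g p v * (starRingEnd ℂ) (h p)).re
        + (g p * (starRingEnd ℂ) (fderiv ℝ h p v)).re := by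
  have hh' : DifferentiableAt ℝ (fun q => (starRingEnd ℂ) (h q)) p := hh.star
  have hm : DifferentiableAt ℝ (fun q => g q * (starRingEnd ℂ) (h q)) p := hg.mul hh'
  have h1 : fderiv ℝ (fun q => (g q * (starRingEnd ℂ) (h q)).re) p
      = Complex.reCLM.comp (fderiv ℝ (fun q => g q * (starRingEnd ℂ) (h q)) p) :=
    (Complex.reCLM.hasFDerivAt.comp p hm.hasFDerivAt).fderiv
  have h2 := congrArg (fun (L : Pd d →L[ℝ] ℝ) => L v) h1
  simp only [ContinuousLinearMap.coe_comp', Function.comp_apply] at h2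
  rw [h2]
  have h3 := congrArg (fun (L : Pd d →L[ℝ] ℂ) => L v) (fderiv_fun_mul (𝕜 := ℝ) hg hh')
  simp only [ContinuousLinearMap.add_apply, ContinuousLinearMap.smul_apply] at h3
  rw [h3, fderiv_conj_apply]
  simp only [smul_eq_mul, Complex.reCLM_apply, Complex.add_re, Complex.mul_re, Complex.conj_re,
    Complex.conj_im]
  ring

lemma fderiv_mul_apply' {a b : Pd d → ℝ} {p : Pd d} (ha : DifferentiableAt ℝ a p)
    (hb : DifferentiableAt ℝ b p) (v : Pd d) :
    fderiv ℝ (fun q => a q * b q) p v = a p * fderiv ℝ b p v + b p * fderiv ℝ a p v := by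
  rw [fderiv_fun_mul ha hb]
  simp [smul_eq_mul]

lemma fderiv_add_apply' {a b : Pd d → ℝ} {p : Pd d} (ha : DifferentiableAt ℝ a p)
    (hb : DifferentiableAt ℝ b p) (v : Pd d) :
    fderiv ℝ (fun q => a q + b q) p v = fderiv ℝ a p v + fderiv ℝ b p v := by
  rw [fderiv_fun_add ha hb]
  rfl

lemma diffAt_re_mul_conj {g h : Pd d → ℂ} {p : Pd d} (hg : DifferentiableAt ℝ g p)
    (hh : DifferentiableAt ℝ h p) :
    DifferentiableAt ℝ (fun q => (g q * (starRingEnd ℂ) (h q)).re) p := by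
  have : DifferentiableAt ℝ (fun q => g q * (starRingEnd ℂ) (h q)) p := by
    exact hg.mul (by exact hh.star)
  exact Complex.reCLM.differentiableAt.comp p this

/-- The main product-rule computation for the divergence-form terms. -/
lemma fderiv_FG {u : Pd d → ℂ} {c : Pd d → ℝ} (hw : ContDiff ℝ (⊤ : ℕ∞) w)
    (hu : ContDiff ℝ (⊤ : ℕ∞) u) (hc : ContDiff ℝ (⊤ : ℕ∞) c) (p v : Pd d) :
    fderiv ℝ (fun q => ((u q * (starRingEnd ℂ) (w q)).re
        + c q * (w q * (starRingEnd ℂ) (w q)).re) * Ee q) p v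
      = ((u p * (starRingEnd ℂ) (w p)).re + c p * (w p * (starRingEnd ℂ) (w p)).re)
          * (Ee p * fderiv ℝ Ab p v)
        + Ee p * (((fderiv ℝ u p v * (starRingEnd ℂ) (w p)).re
              + (u p * (starRingEnd ℂ) (fderiv ℝ w p v)).re)
            + (c p * ((fderiv ℝ w p v * (starRingEnd ℂ) (w p)).re
                  + (w p * (starRingEnd ℂ) (fderiv ℝ w p v)).re)
                + (w p * (starRingEnd ℂ) (w p)).re * fderiv ℝ c p v)) := by
  have hwd : DifferentiableAt ℝ w p := (hw.differentiable (by simp)).differentiableAt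
  have hud : DifferentiableAt ℝ u p := (hu.differentiable (by simp)).differentiableAt
  have hcd : DifferentiableAt ℝ c p := (hc.differentiable (by simp)).differentiableAt
  have hEed : DifferentiableAt ℝ (Ee (d := d)) p :=
    (contDiff_Ee.differentiable (by simp)).differentiableAt
  have hf1 : DifferentiableAt ℝ (fun q => (u q * (starRingEnd ℂ) (w q)).re) p :=
    diffAt_re_mul_conj hud hwd
  have hn : DifferentiableAt ℝ (fun q => (w q * (starRingEnd ℂ) (w q)).re) p :=
    diffAt_re_mul_conj hwd hwd
  rw [fderiv_mul_apply' (hf1.fun_add (hcd.fun_mul hn)) hEed, fderiv_Ee_apply,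
    fderiv_add_apply' hf1 (hcd.fun_mul hn), fderiv_mul_apply' hcd hn,
    fderiv_re_mul_conj hud hwd, fderiv_re_mul_conj hwd hwd]

lemma key_alg (z u r sx sp : ℂ) (x t e : ℝ) :
    ((u * (starRingEnd ℂ) z).re + ((1/4 : ℝ) * (x - t)) * (z * (starRingEnd ℂ) z).re)
        * (e * ((x + t)/2))
      + e * (((sx * (starRingEnd ℂ) z).re + (u * (starRingEnd ℂ) u).re)
          + (((1/4 : ℝ) * (x - t)) * ((u * (starRingEnd ℂ) z).re + (z * (starRingEnd ℂ) u).re)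
              + (z * (starRingEnd ℂ) z).re * ((1/4) * (1 - 0))))
      + (((r * (starRingEnd ℂ) z).re + ((1/4 : ℝ) * (3*x + 7*t)) * (z * (starRingEnd ℂ) z).re)
          * (e * ((x + 3*t)/2))
        + e * (((sp * (starRingEnd ℂ) z).re + (r * (starRingEnd ℂ) r).re)
            + (((1/4 : ℝ) * (3*x + 7*t)) * ((r * (starRingEnd ℂ) z).re
                  + (z * (starRingEnd ℂ) r).re)
                + (z * (starRingEnd ℂ) z).re * ((1/4) * (3*0 + 7*1)))))
      = ((-((t:ℂ) * u) + (x:ℂ) * r + sp + 2 * (z + (t:ℂ) * r) + sx) * (starRingEnd ℂ) z).re * e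
        + (Complex.normSq (u + (((x + t)/2 : ℝ) : ℂ) * z)
            + Complex.normSq (r + (((x + 3*t)/2 : ℝ) : ℂ) * z)) * e := by
  simp only [Complex.mul_re, Complex.mul_im, Complex.add_re, Complex.add_im, Complex.neg_re,
    Complex.neg_im, Complex.conj_re, Complex.conj_im, Complex.normSq_apply, Complex.ofReal_re,
    Complex.ofReal_im, Complex.re_ofNat, Complex.im_ofNat]
  ring

lemma key_i (hw : ContDiff ℝ (⊤ : ℕ∞) w) (p : Pd d) (i : Fin d) :
    fderiv ℝ (Fp w i) p (exdir i) + fderiv ℝ (Gp w i) p (epdir i)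
      = (Lterm w i p * (starRingEnd ℂ) (w p)).re * Ee p
        + (Complex.normSq (fderiv ℝ w p (exdir i) + (((p.1 i + p.2 i)/2 : ℝ) : ℂ) * w p)
          + Complex.normSq (fderiv ℝ w p (epdir i) + (((p.1 i + 3*p.2 i)/2 : ℝ) : ℂ) * w p))
            * Ee p := by
  have hcX : fderiv ℝ (fun q : Pd d => (1/4 : ℝ) * (q.1 i - q.2 i)) p (exdir i)
      = (1/4 : ℝ) * (1 - 0) := by
    have hsub : DifferentiableAt ℝ (fun q : Pd d => q.1 i - q.2 i) p :=
      (((diff_cX i).differentiable (by simp)).differentiableAt).sub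
        (((diff_cY i).differentiable (by simp)).differentiableAt)
    rw [fderiv_const_mul hsub, ContinuousLinearMap.smul_apply, smul_eq_mul,
      fderiv_fun_sub (((diff_cX i).differentiable (by simp)).differentiableAt)
        (((diff_cY i).differentiable (by simp)).differentiableAt),
      ContinuousLinearMap.sub_apply, fderiv_cX, fderiv_cY]
    simp [exdir, EuclideanSpace.single_apply]
  have hcY : fderiv ℝ (fun q : Pd d => (1/4 : ℝ) * (3 * q.1 i + 7 * q.2 i)) p (epdir i)
      = (1/4 : ℝ) * (3 * 0 + 7 * 1) := by
    have h1 : DifferentiableAt ℝ (fun q : Pd d => (3:ℝ) * q.1 i) p :=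
      (((diff_cX i).differentiable (by simp)).differentiableAt).const_mul 3
    have h2 : DifferentiableAt ℝ (fun q : Pd d => (7:ℝ) * q.2 i) p :=
      (((diff_cY i).differentiable (by simp)).differentiableAt).const_mul 7
    rw [fderiv_const_mul (h1.fun_add h2), ContinuousLinearMap.smul_apply, smul_eq_mul,
      fderiv_fun_add h1 h2, ContinuousLinearMap.add_apply,
      fderiv_const_mul (((diff_cX i).differentiable (by simp)).differentiableAt),
      fderiv_const_mul (((diff_cY i).differentiable (by simp)).differentiableAt),
      ContinuousLinearMap.smul_apply, ContinuousLinearMap.smul_apply, fderiv_cX, fderiv_cY]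
    simp [epdir, EuclideanSpace.single_apply]
  have hx := fderiv_FG (w := w) (u := fun q => fderiv ℝ w q (exdir i))
    (c := fun q : Pd d => (1/4 : ℝ) * (q.1 i - q.2 i)) hw (contDiff_fderiv_apply hw _)
    (contDiff_const.mul ((diff_cX i).sub (diff_cY i))) p (exdir i)
  have hy := fderiv_FG (w := w) (u := fun q => fderiv ℝ w q (epdir i))
    (c := fun q : Pd d => (1/4 : ℝ) * (3 * q.1 i + 7 * q.2 i)) hw (contDiff_fderiv_apply hw _)
    (contDiff_const.mul ((contDiff_const.mul (diff_cX i)).add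
      (contDiff_const.mul (diff_cY i)))) p (epdir i)
  rw [hcX, fderiv_Ab_exdir] at hx
  rw [hcY, fderiv_Ab_epdir] at hy
  have hF : fderiv ℝ (Fp w i) p (exdir i)
      = ((fderiv ℝ w p (exdir i) * (starRingEnd ℂ) (w p)).re
          + ((1/4 : ℝ) * (p.1 i - p.2 i)) * (w p * (starRingEnd ℂ) (w p)).re)
            * (Ee p * ((p.1 i + p.2 i)/2))
        + Ee p * (((fderiv ℝ (fun q => fderiv ℝ w q (exdir i)) p (exdir i)
                * (starRingEnd ℂ) (w p)).re
              + (fderiv ℝ w p (exdir i) * (starRingEnd ℂ) (fderiv ℝ w p (exdir i))).re)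
            + (((1/4 : ℝ) * (p.1 i - p.2 i)) * ((fderiv ℝ w p (exdir i)
                    * (starRingEnd ℂ) (w p)).re
                  + (w p * (starRingEnd ℂ) (fderiv ℝ w p (exdir i))).re)
                + (w p * (starRingEnd ℂ) (w p)).re * ((1/4 : ℝ) * (1 - 0)))) := hx
  have hG : fderiv ℝ (Gp w i) p (epdir i)
      = ((fderiv ℝ w p (epdir i) * (starRingEnd ℂ) (w p)).re
          + ((1/4 : ℝ) * (3 * p.1 i + 7 * p.2 i)) * (w p * (starRingEnd ℂ) (w p)).re)
            * (Ee p * ((p.1 i + 3 * p.2 i)/2))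
        + Ee p * (((fderiv ℝ (fun q => fderiv ℝ w q (epdir i)) p (epdir i)
                * (starRingEnd ℂ) (w p)).re
              + (fderiv ℝ w p (epdir i) * (starRingEnd ℂ) (fderiv ℝ w p (epdir i))).re)
            + (((1/4 : ℝ) * (3 * p.1 i + 7 * p.2 i)) * ((fderiv ℝ w p (epdir i)
                    * (starRingEnd ℂ) (w p)).re
                  + (w p * (starRingEnd ℂ) (fderiv ℝ w p (epdir i))).re)
                + (w p * (starRingEnd ℂ) (w p)).re * ((1/4 : ℝ) * (3 * 0 + 7 * 1)))) := hy
  rw [hF, hG]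
  have halg := key_alg (w p) (fderiv ℝ w p (exdir i)) (fderiv ℝ w p (epdir i))
    (fderiv ℝ (fun q => fderiv ℝ w q (exdir i)) p (exdir i))
    (fderiv ℝ (fun q => fderiv ℝ w q (epdir i)) p (epdir i)) (p.1 i) (p.2 i) (Ee p)
  rw [halg]
  simp only [Lterm, Complex.mul_re, Complex.mul_im, Complex.add_re, Complex.add_im,
    Complex.neg_re, Complex.neg_im, Complex.conj_re, Complex.conj_im, Complex.normSq_apply,
    Complex.ofReal_re, Complex.ofReal_im, Complex.re_ofNat, Complex.im_ofNat, Complex.sub_re,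
    Complex.sub_im]

lemma contDiff_Fp (hw : ContDiff ℝ (⊤ : ℕ∞) w) (i : Fin d) : ContDiff ℝ (⊤ : ℕ∞) (Fp w i) := by
  refine ContDiff.mul ?_ contDiff_Ee
  refine ContDiff.add ?_ ?_
  · exact Complex.reCLM.contDiff.comp ((contDiff_fderiv_apply hw _).mul (contDiff_conj hw))
  · exact (contDiff_const.mul ((diff_cX i).sub (diff_cY i))).mul
      (Complex.reCLM.contDiff.comp (hw.mul (contDiff_conj hw)))

lemma contDiff_Gp (hw : ContDiff ℝ (⊤ : ℕ∞) w) (i : Fin d) : ContDiff ℝ (⊤ : ℕ∞) (Gp w i) := by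
  refine ContDiff.mul ?_ contDiff_Ee
  refine ContDiff.add ?_ ?_
  · exact Complex.reCLM.contDiff.comp ((contDiff_fderiv_apply hw _).mul (contDiff_conj hw))
  · exact (contDiff_const.mul ((contDiff_const.mul (diff_cX i)).add
      (contDiff_const.mul (diff_cY i)))).mul
      (Complex.reCLM.contDiff.comp (hw.mul (contDiff_conj hw)))

lemma supp_Fp (hsupp : HasCompactSupport w) (i : Fin d) : HasCompactSupport (Fp w i) := by
  apply HasCompactSupport.intro hsupp
  intro x hx
  have h0 : w x = 0 := image_eq_zero_of_notMem_tsupport hx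
  simp [Fp, h0]

lemma supp_Gp (hsupp : HasCompactSupport w) (i : Fin d) : HasCompactSupport (Gp w i) := by
  apply HasCompactSupport.intro hsupp
  intro x hx
  have h0 : w x = 0 := image_eq_zero_of_notMem_tsupport hx
  simp [Gp, h0]

lemma integral_fderiv_dir_eq_zero {h : Pd d → ℝ} (hh : ContDiff ℝ (⊤ : ℕ∞) h)
    (hc : HasCompactSupport h) (v : Pd d) : ∫ p : Pd d, fderiv ℝ h p v = 0 := by
  haveI : (volume : Measure (Pd d)).IsAddHaarMeasure := by
    rw [Measure.volume_eq_prod]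
    exact Measure.prod.instIsAddHaarMeasure _ _
  have hcont : Continuous fun p : Pd d => fderiv ℝ h p v := by
    have hcd : ContDiff ℝ (⊤ : ℕ∞) fun p : Pd d => fderiv ℝ h p v :=
      (hh.fderiv_right (by simp)).clm_apply contDiff_const
    exact hcd.continuous
  have hint : Integrable (fun p : Pd d => fderiv ℝ h p v) :=
    hcont.integrable_of_hasCompactSupport (hc.fderiv_apply ℝ v)
  have hmain := integral_mul_fderiv_eq_neg_fderiv_mul_of_integrable (μ := volume)
    (f := fun _ : Pd d => (1:ℝ)) (g := h) (v := v)
    (by simp only [fderiv_fun_const, Pi.zero_apply, ContinuousLinearMap.zero_apply, zero_mul]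
        exact integrable_zero _ _ _)
    (by simpa only [one_mul] using hint)
    (by simpa only [one_mul] using hh.continuous.integrable_of_hasCompactSupport hc)
    (fun x _ => differentiableAt_const _)
    (fun x _ => (hh.differentiable (by simp)).differentiableAt)
  simp only [one_mul, fderiv_fun_const, Pi.zero_apply, ContinuousLinearMap.zero_apply, zero_mul,
    integral_zero, neg_zero] at hmain
  exact hmain

lemma mul_ofReal_re (a : ℂ) (e : ℝ) : (a * (e : ℂ)).re = a.re * e := by
  simp [Complex.mul_re]

lemma cont_fderiv_dir {f : Pd d → ℂ} (hf : ContDiff ℝ (⊤ : ℕ∞) f) (v : Pd d) :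
    Continuous fun q => fderiv ℝ f q v := (contDiff_fderiv_apply hf v).continuous

lemma cont_Lterm (hw : ContDiff ℝ (⊤ : ℕ∞) w) (i : Fin d) : Continuous (Lterm w i) := by
  have h1 : Continuous fun p : Pd d => ((p.2 i : ℝ) : ℂ) :=
    Complex.continuous_ofReal.comp (diff_cY i).continuous
  have h2 : Continuous fun p : Pd d => ((p.1 i : ℝ) : ℂ) :=
    Complex.continuous_ofReal.comp (diff_cX i).continuous
  have h3 := cont_fderiv_dir hw (exdir i)
  have h4 := cont_fderiv_dir hw (epdir i)
  have h5 := cont_fderiv_dir (contDiff_fderiv_apply hw (epdir i)) (epdir i)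
  have h6 := cont_fderiv_dir (contDiff_fderiv_apply hw (exdir i)) (exdir i)
  exact (((((h1.mul h3).neg).add (h2.mul h4)).add h5).add
    (continuous_const.mul (hw.continuous.add (h1.mul h4)))).add h6

noncomputable def Sfun (w : Pd d → ℂ) : Pd d → ℝ := fun p => ∑ i : Fin d,
  (Complex.normSq (fderiv ℝ w p (exdir i) + (((p.1 i + p.2 i)/2 : ℝ) : ℂ) * w p)
    + Complex.normSq (fderiv ℝ w p (epdir i) + (((p.1 i + 3*p.2 i)/2 : ℝ) : ℂ) * w p)) * Ee p

lemma Sfun_nonneg (p : Pd d) : 0 ≤ Sfun w p :=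
  Finset.sum_nonneg fun i _ => mul_nonneg
    (add_nonneg (Complex.normSq_nonneg _) (Complex.normSq_nonneg _)) (Ee_pos p).le

lemma cont_Sfun (hw : ContDiff ℝ (⊤ : ℕ∞) w) : Continuous (Sfun w) := by
  refine continuous_finset_sum _ fun i _ => Continuous.mul ?_ contDiff_Ee.continuous
  refine Continuous.add ?_ ?_
  · exact Complex.continuous_normSq.comp ((cont_fderiv_dir hw _).add
      ((Complex.continuous_ofReal.comp
        (((diff_cX i).continuous.add (diff_cY i).continuous).div_const 2)).mul hw.continuous))
  · exact Complex.continuous_normSq.comp ((cont_fderiv_dir hw _).add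
      ((Complex.continuous_ofReal.comp
        (((diff_cX i).continuous.add
          (continuous_const.mul (diff_cY i).continuous)).div_const 2)).mul hw.continuous))

lemma supp_Sfun (hsupp : HasCompactSupport w) : HasCompactSupport (Sfun w) := by
  apply HasCompactSupport.intro hsupp
  intro x hx
  have h0 : w x = 0 := image_eq_zero_of_notMem_tsupport hx
  have h1 : fderiv ℝ w x = 0 := fderiv_of_notMem_tsupport ℝ hx
  simp [Sfun, h0, h1]

lemma int_fderiv_dir {h : Pd d → ℝ} (hh : ContDiff ℝ (⊤ : ℕ∞) h) (hc : HasCompactSupport h)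
    (v : Pd d) : Integrable (fun p : Pd d => fderiv ℝ h p v) := by
  have hcont : Continuous fun p : Pd d => fderiv ℝ h p v := by
    have hcd : ContDiff ℝ (⊤ : ℕ∞) fun p : Pd d => fderiv ℝ h p v :=
      (hh.fderiv_right (by simp)).clm_apply contDiff_const
    exact hcd.continuous
  exact hcont.integrable_of_hasCompactSupport (hc.fderiv_apply ℝ v)

lemma point_identity (hw : ContDiff ℝ (⊤ : ℕ∞) w) (p : Pd d) :
    ((∑ i, Lterm w i p) * (starRingEnd ℂ) (w p) * ((Ee p : ℝ) : ℂ)).re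
      = (∑ i, (fderiv ℝ (Fp w i) p (exdir i) + fderiv ℝ (Gp w i) p (epdir i))) - Sfun w p := by
  have h1 : ((∑ i, Lterm w i p) * (starRingEnd ℂ) (w p) * ((Ee p : ℝ) : ℂ)).re
      = ∑ i, (Lterm w i p * (starRingEnd ℂ) (w p)).re * Ee p := by
    rw [Finset.sum_mul, Finset.sum_mul, Complex.re_sum]
    exact Finset.sum_congr rfl fun i _ => mul_ofReal_re _ _
  rw [h1]
  unfold Sfun
  rw [← Finset.sum_sub_distrib]
  refine Finset.sum_congr rfl fun i _ => ?_
  have hk := key_i hw p i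
  linarith

theorem main_aux (hw : ContDiff ℝ (⊤ : ℕ∞) w) (hsupp : HasCompactSupport w) :
    (∫ p : Pd d, WFP.L w p * (starRingEnd ℂ) (w p) * ((Ee p : ℝ) : ℂ)).re ≤ 0 := by
  haveI : (volume : Measure (Pd d)).IsAddHaarMeasure := by
    rw [Measure.volume_eq_prod]
    exact Measure.prod.instIsAddHaarMeasure _ _
  have hfun : (fun p : Pd d => WFP.L w p * (starRingEnd ℂ) (w p) * ((Ee p : ℝ) : ℂ))
      = fun p : Pd d => (∑ i, Lterm w i p) * (starRingEnd ℂ) (w p) * ((Ee p : ℝ) : ℂ) := by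
    funext p
    rw [L_decomp hw p]
  rw [hfun]
  have hXc_cont : Continuous (fun p : Pd d =>
      (∑ i, Lterm w i p) * (starRingEnd ℂ) (w p) * ((Ee p : ℝ) : ℂ)) :=
    ((continuous_finset_sum _ fun i _ => cont_Lterm hw i).mul
      (contDiff_conj hw).continuous).mul (Complex.continuous_ofReal.comp contDiff_Ee.continuous)
  have hXc_supp : HasCompactSupport (fun p : Pd d =>
      (∑ i, Lterm w i p) * (starRingEnd ℂ) (w p) * ((Ee p : ℝ) : ℂ)) := by
    apply HasCompactSupport.intro hsupp
    intro x hx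
    simp [image_eq_zero_of_notMem_tsupport hx]
  have hXc_int : Integrable (fun p : Pd d =>
      (∑ i, Lterm w i p) * (starRingEnd ℂ) (w p) * ((Ee p : ℝ) : ℂ)) volume :=
    hXc_cont.integrable_of_hasCompactSupport hXc_supp
  have hre := integral_re hXc_int
  rw [show (∫ p : Pd d, (∑ i, Lterm w i p) * (starRingEnd ℂ) (w p) * ((Ee p : ℝ) : ℂ)).re
      = RCLike.re (∫ p : Pd d, (∑ i, Lterm w i p) * (starRingEnd ℂ) (w p) * ((Ee p : ℝ) : ℂ))
      from rfl, ← hre]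
  have hpoint : ∀ p : Pd d,
      RCLike.re ((∑ i, Lterm w i p) * (starRingEnd ℂ) (w p) * ((Ee p : ℝ) : ℂ))
      = (∑ i, (fderiv ℝ (Fp w i) p (exdir i) + fderiv ℝ (Gp w i) p (epdir i))) - Sfun w p := by
    intro p
    rw [RCLike.re_to_complex]
    exact point_identity hw p
  simp only [hpoint]
  have hterm : ∀ i : Fin d, Integrable (fun p : Pd d =>
      fderiv ℝ (Fp w i) p (exdir i) + fderiv ℝ (Gp w i) p (epdir i)) volume := fun i =>
    (int_fderiv_dir (contDiff_Fp hw i) (supp_Fp hsupp i) _).add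
      (int_fderiv_dir (contDiff_Gp hw i) (supp_Gp hsupp i) _)
  have hDint : Integrable (fun p : Pd d =>
      ∑ i : Fin d, (fderiv ℝ (Fp w i) p (exdir i) + fderiv ℝ (Gp w i) p (epdir i))) :=
    integrable_finset_sum _ fun i _ => hterm i
  have hSint : Integrable (Sfun w) :=
    (cont_Sfun hw).integrable_of_hasCompactSupport (supp_Sfun hsupp)
  rw [integral_sub hDint hSint]
  have hDzero : (∫ p : Pd d,
      ∑ i : Fin d, (fderiv ℝ (Fp w i) p (exdir i) + fderiv ℝ (Gp w i) p (epdir i))) = 0 := by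
    rw [integral_finset_sum _ fun i _ => hterm i]
    refine Finset.sum_eq_zero fun i _ => ?_
    rw [integral_add (int_fderiv_dir (contDiff_Fp hw i) (supp_Fp hsupp i) _)
        (int_fderiv_dir (contDiff_Gp hw i) (supp_Gp hsupp i) _),
      integral_fderiv_dir_eq_zero (contDiff_Fp hw i) (supp_Fp hsupp i),
      integral_fderiv_dir_eq_zero (contDiff_Gp hw i) (supp_Gp hsupp i), add_zero]
  rw [hDzero]
  have hSnn : 0 ≤ ∫ p : Pd d, Sfun w p := integral_nonneg fun p => Sfun_nonneg p
  linarith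

end WFPAux

/-- `L` restricted to `C_c^∞` is dissipative in the Gaussian-weighted space
`H = L²(ℝ^{2d}, e^A dx dξ)`:
`Re ∬ (L w) conj(w) e^A ≤ 0` for every smooth compactly supported `w`. -/
theorem WFP.L_dissipative (d : ℕ) (hd : 1 ≤ d)
    (w : EuclideanSpace ℝ (Fin d) × EuclideanSpace ℝ (Fin d) → ℂ)
    (hw : ContDiff ℝ (⊤ : ℕ∞) w) (hsupp : HasCompactSupport w) :
    (∫ p : EuclideanSpace ℝ (Fin d) × EuclideanSpace ℝ (Fin d),
        WFP.L w p * (starRingEnd ℂ) (w p) * (Real.exp (WFP.A p.1 p.2) : ℂ)).re ≤ 0 :=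
  WFPAux.main_aux hw hsupp
end

section
/- Let d ≥ 1 and A(x,ξ) := (1/4)(|x|² + 2 x·ξ + 3|ξ|²), with ∇A the gradient in all 2d variables. Then with K := 144, for every integer m ≥ K·d and every (x,ξ) ∈ ℝ^{2d} with |x|² + |ξ|² ≥ 12: 4d (1 + A(x,ξ)^m) ≤ m A(x,ξ)^{m−1} |∇A(x,ξ)|². -/
open MeasureTheory Real

/-- `|∇A|²`, the squared length of the full gradient `∇A(x,ξ) = (1/2)(x+ξ, x+3ξ)`. -/
noncomputable def WFP.gradAsq {d : ℕ} (x ξ : EuclideanSpace ℝ (Fin d)) : ℝ :=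
  (1 / 4) * (‖x + ξ‖ ^ 2 + ‖x + (3 : ℝ) • ξ‖ ^ 2)

/-!
On `‖x‖² + ‖ξ‖² ≥ 12` the quadratic form `A` is at least `1`, so `1 + A^m ≤ 2 A^m`, and `A` is
dominated by `12 |∇A|²` everywhere. Hence `4d (1 + A^m) ≤ 96 d A^{m-1} |∇A|²`, and `96 d ≤ m`.
-/

namespace WFP

theorem mul_one_add_pow_le {n a g : ℝ} {m : ℕ} (hn : 0 ≤ n) (ha : 1 ≤ a)
    (h : 2 * n * a ≤ m * g) : n * (1 + a ^ m) ≤ m * a ^ (m - 1) * g := by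
  have ha0 : 0 ≤ a := zero_le_one.trans ha
  calc n * (1 + a ^ m) ≤ n * (2 * a ^ m) := by gcongr; linarith [one_le_pow₀ (n := m) ha]
    _ ≤ n * (2 * a ^ (m - 1 + 1)) := by gcongr; omega
    _ = a ^ (m - 1) * (2 * n * a) := by ring
    _ ≤ a ^ (m - 1) * (m * g) := by gcongr
    _ = m * a ^ (m - 1) * g := by ring

variable {d : ℕ} (x ξ : EuclideanSpace ℝ (Fin d))

theorem gradAsq_eq : gradAsq x ξ =
    (1 / 4) * (2 * ‖x‖ ^ 2 + 8 * inner ℝ x ξ + 10 * ‖ξ‖ ^ 2) := by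
  rw [gradAsq, norm_add_sq_real, norm_add_sq_real, real_inner_smul_right, norm_smul,
    Real.norm_of_nonneg (by norm_num : (0 : ℝ) ≤ 3)]
  ring

theorem gradAsq_nonneg : 0 ≤ gradAsq x ξ := by
  unfold gradAsq; positivity

-- By Cauchy–Schwarz this reduces to `23 a² - 94 a b + 117 b² ≥ 0` with `a = ‖x‖`, `b = ‖ξ‖`.
theorem A_le_twelve_mul_gradAsq : A x ξ ≤ 12 * gradAsq x ξ := by
  have := neg_le_of_abs_le (abs_real_inner_le_norm x ξ)
  rw [A, gradAsq_eq]
  nlinarith [sq_nonneg (23 * ‖x‖ - 47 * ‖ξ‖), norm_nonneg x, norm_nonneg ξ]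

theorem one_le_A {x ξ : EuclideanSpace ℝ (Fin d)} (h : 12 ≤ ‖x‖ ^ 2 + ‖ξ‖ ^ 2) :
    1 ≤ A x ξ := by
  have := neg_le_of_abs_le (abs_real_inner_le_norm x ξ)
  rw [A]
  nlinarith [sq_nonneg (‖x‖ - 2 * ‖ξ‖), norm_nonneg x, norm_nonneg ξ]

end WFP

theorem WFP.lemma_b_general (d : ℕ) (m : ℕ) (hm : 144 * d ≤ m)
    (x ξ : EuclideanSpace ℝ (Fin d)) (hxξ : 12 ≤ ‖x‖ ^ 2 + ‖ξ‖ ^ 2) :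
    (4 * d : ℝ) * (1 + WFP.A x ξ ^ m) ≤ (m : ℝ) * WFP.A x ξ ^ (m - 1) * WFP.gradAsq x ξ := by
  have hm_real : (144 * d : ℝ) ≤ m := by exact_mod_cast hm
  have hG := gradAsq_nonneg x ξ
  refine mul_one_add_pow_le (by positivity) (one_le_A hxξ) ?_
  calc 2 * (4 * d) * A x ξ ≤ 2 * (4 * d) * (12 * gradAsq x ξ) := by
        gcongr; exact A_le_twelve_mul_gradAsq x ξ
    _ = 96 * d * gradAsq x ξ := by ring
    _ ≤ m * gradAsq x ξ := by gcongr; linarith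

/-- with `K = 144`, for `m ≥ K·d` and `|x|²+|ξ|² ≥ 12`:
`4d(1 + A^m) ≤ m A^{m−1} |∇A|²`. -/
theorem WFP.lemma_b (d : ℕ) (hd : 1 ≤ d) (m : ℕ) (hm : 144 * d ≤ m)
    (x ξ : EuclideanSpace ℝ (Fin d)) (hxξ : 12 ≤ ‖x‖ ^ 2 + ‖ξ‖ ^ 2) :
    (4 * d : ℝ) * (1 + WFP.A x ξ ^ m) ≤ (m : ℝ) * WFP.A x ξ ^ (m - 1) * WFP.gradAsq x ξ :=
  WFP.lemma_b_general d m hm x ξ hxξ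
end
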